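/- Characterization of I(X;Y) = C(X;Y) via ergodic decomposition: for finite (X,Y) with ergodic decomposition W, if X - W - Y is a Markov chain then I(X;Y) = C(X;Y); conversely, if I(X;Y) = C(X;Y) then the ergodic decomposition W satisfies the Markov chain X - W - Y. -/
import Mathlib


open scoped BigOperators Classical
set_option linter.unusedSectionVars false
set_option linter.unusedVariables false
set_option maxHeartbeats 1000000

/-- `p` is a probability distribution on the finite type `A`. -/
def IsDist {A : Type*} [Fintype A] (p : A → ℝ) : Prop :=
  (∀ a, 0 ≤ p a) ∧ ∑ a, p a = 1

/-- The pushforward (distribution of the random variable `f`) of `p` under `f`. -/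
noncomputable def push {Om A : Type*} [Fintype Om] (p : Om → ℝ) (f : Om → A) : A → ℝ :=
  fun a => ∑ om, if f om = a then p om else 0

/-- Shannon entropy `H(f)` of the random variable `f` on the probability space `(Om, p)`. -/
noncomputable def ent {Om A : Type*} [Fintype Om] [Fintype A] (p : Om → ℝ) (f : Om → A) : ℝ :=
  ∑ a, Real.negMulLog (push p f a)

/-- Conditional Shannon entropy `H(f | g)`. -/
noncomputable def condEnt {Om A B : Type*} [Fintype Om] [Fintype A] [Fintype B]
    (p : Om → ℝ) (f : Om → A) (g : Om → B) : ℝ :=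
  ent p (fun om => (f om, g om)) - ent p g

/-- Mutual information `I(f ; g)`. -/
noncomputable def mutInfo {Om A B : Type*} [Fintype Om] [Fintype A] [Fintype B]
    (p : Om → ℝ) (f : Om → A) (g : Om → B) : ℝ :=
  ent p f + ent p g - ent p (fun om => (f om, g om))

/-- Conditional mutual information `I(f ; g | h)`. -/
noncomputable def condMutInfo {Om A B C : Type*} [Fintype Om] [Fintype A] [Fintype B] [Fintype C]
    (p : Om → ℝ) (f : Om → A) (g : Om → B) (h : Om → C) : ℝ :=
  ent p (fun om => (f om, h om)) + ent p (fun om => (g om, h om))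
    - ent p (fun om => (f om, g om, h om)) - ent p h

/-- The edge (step) relation of the bipartite graphical representation of `P` on the
vertex set `X ⊔ Y`: there is an edge between `x` and `y` iff `P(x,y) > 0`. -/
def step {X Y : Type*} (P : X × Y → ℝ) : (X ⊕ Y) → (X ⊕ Y) → Prop
  | Sum.inl x, Sum.inr y => 0 < P (x, y)
  | Sum.inr y, Sum.inl x => 0 < P (x, y)
  | _, _ => False

/-- Two vertices lie in the same connected component of the bipartite graph. -/
def sameComp {X Y : Type*} (P : X × Y → ℝ) (u v : X ⊕ Y) : Prop :=
  Relation.ReflTransGen (step P) u v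

section lemmas
variable {Om A B C : Type*} [Fintype Om] [Fintype A] [Fintype B] [Fintype C]
  (p : Om → ℝ)

lemma push_nonneg (hp : ∀ om, 0 ≤ p om) (f : Om → A) (a : A) : 0 ≤ push p f a := by
  refine Finset.sum_nonneg fun om _ => ?_
  split
  · exact hp om
  · exact le_rfl

lemma push_id : push p (fun om => om) = p := by
  funext a
  simp [push]

lemma push_comp (f : Om → A) (e : A → B) :
    push p (fun om => e (f om)) = push (push p f) e := by
  funext b
  unfold push
  have : ∀ a : A, (if e a = b then ∑ om, if f om = a then p om else 0 else 0)
      = ∑ om, if f om = a then (if e a = b then p om else 0) else 0 := by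
    intro a
    by_cases h : e a = b <;> simp [h]
  rw [Finset.sum_congr rfl fun a _ => this a, Finset.sum_comm]
  refine Finset.sum_congr rfl fun om _ => ?_
  rw [Finset.sum_ite_eq Finset.univ (f om) (fun a => if e a = b then p om else 0)]
  simp

lemma push_congr_ae {f g : Om → A} (h : ∀ om, p om ≠ 0 → f om = g om) :
    push p f = push p g := by
  funext a
  refine Finset.sum_congr rfl fun om _ => ?_
  by_cases hp : p om = 0
  · simp [hp]
  · rw [h om hp]

lemma push_comp_eval (q : A → ℝ) (e : A → B) (a : A) (he : Function.Injective e) :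
    push q e (e a) = q a := by
  unfold push
  rw [Finset.sum_eq_single a]
  · simp
  · intro b _ hb
    simp only [ite_eq_right_iff]
    intro hh; exact absurd (he hh) hb
  · simp

lemma ent_push_comp_inj (q : A → ℝ) (e : A → B) (he : Function.Injective e) :
    ∑ b, Real.negMulLog (push q e b) = ∑ a, Real.negMulLog (q a) := by
  have h1 : ∑ a, Real.negMulLog (q a)
      = ∑ b ∈ Finset.univ.image e, Real.negMulLog (push q e b) := by
    rw [Finset.sum_image (fun a _ b _ hab => he hab)]
    exact Finset.sum_congr rfl fun a _ => by rw [push_comp_eval q e a he]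
  rw [h1]
  refine (Finset.sum_subset (Finset.subset_univ _) fun b _ hb => ?_).symm
  have : push q e b = 0 := by
    apply Finset.sum_eq_zero
    intro a _
    simp only [ite_eq_right_iff]
    intro hh
    exact absurd (Finset.mem_image_of_mem e (Finset.mem_univ a)) (hh ▸ hb)
  rw [this, Real.negMulLog_zero]

lemma ent_comp_inj (f : Om → A) (e : A → B) (he : Function.Injective e) :
    ent p (fun om => e (f om)) = ent p f := by
  unfold ent
  rw [push_comp p f e, ent_push_comp_inj (push p f) e he]

lemma ent_congr_push {f g : Om → A} (h : push p f = push p g) : ent p f = ent p g := by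
  unfold ent; rw [h]

end lemmas

set_option linter.unusedSectionVars false
set_option linter.unusedVariables false
set_option maxHeartbeats 1000000


section core
variable {A B C : Type*} [Fintype A] [Fintype B] [Fintype C]

/-- The integrand of conditional mutual information. -/
noncomputable def cmiTerm (t : A × B × C → ℝ) (u : A × C → ℝ) (v : B × C → ℝ) (w : C → ℝ)
    (x : A × B × C) : ℝ :=
  t x * (Real.log (t x) + Real.log (w x.2.2)
    - Real.log (u (x.1, x.2.2)) - Real.log (v (x.2.1, x.2.2)))

variable (t : A × B × C → ℝ) (u : A × C → ℝ) (v : B × C → ℝ) (w : C → ℝ)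

lemma cmiTerm_lb (ht : ∀ x, 0 ≤ t x)
    (hu : ∀ a c, u (a, c) = ∑ b, t (a, b, c))
    (hv : ∀ b c, v (b, c) = ∑ a, t (a, b, c))
    (hw : ∀ c, w c = ∑ a, ∑ b, t (a, b, c)) (a : A) (b : B) (c : C) :
    t (a, b, c) - u (a, c) * v (b, c) / w c ≤ cmiTerm t u v w (a, b, c) := by
  have htx := ht (a, b, c)
  unfold cmiTerm
  dsimp only
  rcases eq_or_lt_of_le htx with h0 | hpos
  · rw [← h0]
    have : 0 ≤ u (a, c) * v (b, c) / w c := by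
      apply div_nonneg
      · exact mul_nonneg (by rw [hu]; exact Finset.sum_nonneg fun _ _ => ht _)
          (by rw [hv]; exact Finset.sum_nonneg fun _ _ => ht _)
      · rw [hw]; exact Finset.sum_nonneg fun _ _ => Finset.sum_nonneg fun _ _ => ht _
    simp only [zero_mul]
    linarith
  · have hule : t (a, b, c) ≤ u (a, c) := by
      rw [hu]
      exact Finset.single_le_sum (fun b' _ => ht (a, b', c)) (Finset.mem_univ b)
    have hvle : t (a, b, c) ≤ v (b, c) := by
      rw [hv]
      exact Finset.single_le_sum (fun a' _ => ht (a', b, c)) (Finset.mem_univ a)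
    have hupos : 0 < u (a, c) := lt_of_lt_of_le hpos hule
    have hvpos : 0 < v (b, c) := lt_of_lt_of_le hpos hvle
    have hwpos : 0 < w c := by
      rw [hw]
      calc 0 < u (a, c) := hupos
        _ = ∑ b, t (a, b, c) := hu a c
        _ ≤ ∑ a, ∑ b, t (a, b, c) :=
          Finset.single_le_sum (f := fun a' => ∑ b, t (a', b, c))
            (fun a' _ => Finset.sum_nonneg fun _ _ => ht _) (Finset.mem_univ a)
    set T := t (a, b, c)
    set U := u (a, c)
    set V := v (b, c)
    set Wc := w c
    have hlog : Real.log (U * V / (T * Wc)) ≤ U * V / (T * Wc) - 1 :=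
      Real.log_le_sub_one_of_pos (by positivity)
    have hexp : Real.log (U * V / (T * Wc))
        = Real.log U + Real.log V - (Real.log T + Real.log Wc) := by
      rw [Real.log_div (by positivity) (by positivity), Real.log_mul hupos.ne' hvpos.ne',
        Real.log_mul hpos.ne' hwpos.ne']
    have hx : T * (U * V / (T * Wc)) = U * V / Wc := by
      field_simp
    have hmul := mul_le_mul_of_nonneg_left hlog htx
    have hx2 : T * (U * V / (T * Wc) - 1) = U * V / Wc - T := by
      rw [mul_sub, hx, mul_one]
    rw [hexp, hx2] at hmul
    linarith

lemma sum3 (F : A × B × C → ℝ) : ∑ x : A × B × C, F x = ∑ c, ∑ a, ∑ b, F (a, b, c) := by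
  rw [Fintype.sum_prod_type]
  have h1 : ∀ a : A, ∑ y : B × C, F (a, y) = ∑ c, ∑ b, F (a, b, c) := by
    intro a
    rw [Fintype.sum_prod_type]
    exact Finset.sum_comm
  rw [Finset.sum_congr rfl fun a _ => h1 a]
  exact Finset.sum_comm

lemma lb_sum_eq_zero (ht : ∀ x, 0 ≤ t x)
    (hu : ∀ a c, u (a, c) = ∑ b, t (a, b, c))
    (hv : ∀ b c, v (b, c) = ∑ a, t (a, b, c))
    (hw : ∀ c, w c = ∑ a, ∑ b, t (a, b, c)) :
    ∑ x : A × B × C, (t x - u (x.1, x.2.2) * v (x.2.1, x.2.2) / w x.2.2) = 0 := by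
  rw [sum3]
  have hvw : ∀ c, ∑ b, v (b, c) = w c := by
    intro c
    rw [hw]
    rw [Finset.sum_congr rfl fun b _ => hv b c]
    exact Finset.sum_comm
  have hc : ∀ c : C, ∑ a, ∑ b, (t (a, b, c) - u (a, c) * v (b, c) / w c) = 0 := by
    intro c
    have h2 : ∀ a, ∑ b, (u (a, c) * v (b, c) / w c) = u (a, c) * w c / w c := by
      intro a
      rw [← Finset.sum_div, ← Finset.mul_sum, hvw c]
    have h4 : ∀ a, ∑ b, (t (a, b, c) - u (a, c) * v (b, c) / w c)
        = (∑ b, t (a, b, c)) - u (a, c) * w c / w c := by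
      intro a
      rw [Finset.sum_sub_distrib, h2 a]
    rw [Finset.sum_congr rfl fun a _ => h4 a, Finset.sum_sub_distrib]
    have h3 : ∑ a, u (a, c) * w c / w c = w c * w c / w c := by
      rw [← Finset.sum_div, ← Finset.sum_mul]
      have : ∑ a, u (a, c) = w c := by
        rw [hw]
        exact Finset.sum_congr rfl fun a _ => hu a c
      rw [this]
    rw [h3, ← hw c]
    rcases eq_or_ne (w c) 0 with h0 | h0
    · rw [h0]; norm_num
    · rw [mul_div_assoc, div_self h0, mul_one, sub_self]
  rw [Finset.sum_congr rfl fun c _ => hc c, Finset.sum_const_zero]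

lemma cmi_sum_nonneg (ht : ∀ x, 0 ≤ t x)
    (hu : ∀ a c, u (a, c) = ∑ b, t (a, b, c))
    (hv : ∀ b c, v (b, c) = ∑ a, t (a, b, c))
    (hw : ∀ c, w c = ∑ a, ∑ b, t (a, b, c)) : 0 ≤ ∑ x : A × B × C, cmiTerm t u v w x := by
  have h0 := lb_sum_eq_zero t u v w ht hu hv hw
  rw [← h0]
  exact Finset.sum_le_sum fun x _ => cmiTerm_lb t u v w ht hu hv hw x.1 x.2.1 x.2.2

lemma cmi_sum_eq_zero_imp (ht : ∀ x, 0 ≤ t x)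
    (hu : ∀ a c, u (a, c) = ∑ b, t (a, b, c))
    (hv : ∀ b c, v (b, c) = ∑ a, t (a, b, c))
    (hw : ∀ c, w c = ∑ a, ∑ b, t (a, b, c)) (hz : ∑ x : A × B × C, cmiTerm t u v w x = 0) :
    ∀ x : A × B × C, t x * w x.2.2 = u (x.1, x.2.2) * v (x.2.1, x.2.2) := by
  have h0 := lb_sum_eq_zero t u v w ht hu hv hw
  have hslack : ∀ x : A × B × C,
      cmiTerm t u v w x - (t x - u (x.1, x.2.2) * v (x.2.1, x.2.2) / w x.2.2) = 0 := by
    have hs : ∑ x : A × B × C,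
        (cmiTerm t u v w x - (t x - u (x.1, x.2.2) * v (x.2.1, x.2.2) / w x.2.2)) = 0 := by
      rw [Finset.sum_sub_distrib, hz, h0, sub_zero]
    intro x
    have := (Finset.sum_eq_zero_iff_of_nonneg (fun y _ => by
      have hb := cmiTerm_lb t u v w ht hu hv hw y.1 y.2.1 y.2.2
      simp only [sub_nonneg]
      exact hb)).mp hs x (Finset.mem_univ x)
    exact this
  rintro ⟨a, b, c⟩
  have hsl := hslack (a, b, c)
  dsimp only at hsl ⊢
  have hunn : 0 ≤ u (a, c) := by rw [hu]; exact Finset.sum_nonneg fun _ _ => ht _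
  have hvnn : 0 ≤ v (b, c) := by rw [hv]; exact Finset.sum_nonneg fun _ _ => ht _
  have hwnn : 0 ≤ w c := by
    rw [hw]; exact Finset.sum_nonneg fun _ _ => Finset.sum_nonneg fun _ _ => ht _
  rcases eq_or_ne (w c) 0 with hw0 | hw0
  · have hu0 : u (a, c) = 0 := by
      have hle : u (a, c) ≤ w c := by
        rw [hw, hu]
        exact Finset.single_le_sum (f := fun a' => ∑ b', t (a', b', c))
          (fun a' _ => Finset.sum_nonneg fun _ _ => ht _) (Finset.mem_univ a)
      linarith
    rw [hw0, hu0, mul_zero, zero_mul]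
  · rcases eq_or_lt_of_le (ht (a, b, c)) with ht0 | htpos
    · -- t = 0 : slack gives uv/w = 0
      unfold cmiTerm at hsl
      dsimp only at hsl
      rw [← ht0] at hsl
      simp only [zero_mul, zero_sub, sub_neg_eq_add, zero_add] at hsl
      have : u (a, c) * v (b, c) = 0 := by
        have := div_eq_zero_iff.mp hsl
        rcases this with h | h
        · exact h
        · exact absurd h hw0
      rw [← ht0, zero_mul, this]
    · -- t > 0 : strict log inequality unless equality holds
      by_contra hne
      have hule : t (a, b, c) ≤ u (a, c) := by
        rw [hu]
        exact Finset.single_le_sum (fun b' _ => ht (a, b', c)) (Finset.mem_univ b)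
      have hvle : t (a, b, c) ≤ v (b, c) := by
        rw [hv]
        exact Finset.single_le_sum (fun a' _ => ht (a', b, c)) (Finset.mem_univ a)
      have hupos : 0 < u (a, c) := lt_of_lt_of_le htpos hule
      have hvpos : 0 < v (b, c) := lt_of_lt_of_le htpos hvle
      have hwpos : 0 < w c := lt_of_le_of_ne hwnn (Ne.symm hw0)
      set T := t (a, b, c)
      set U := u (a, c)
      set V := v (b, c)
      set Wc := w c
      have hne1 : U * V / (T * Wc) ≠ 1 := by
        intro h1
        apply hne
        rw [div_eq_one_iff_eq (by positivity)] at h1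
        exact h1.symm
      have hlog : Real.log (U * V / (T * Wc)) < U * V / (T * Wc) - 1 :=
        Real.log_lt_sub_one_of_pos (by positivity) hne1
      have hexp : Real.log (U * V / (T * Wc))
          = Real.log U + Real.log V - (Real.log T + Real.log Wc) := by
        rw [Real.log_div (by positivity) (by positivity), Real.log_mul hupos.ne' hvpos.ne',
          Real.log_mul htpos.ne' hwpos.ne']
      have hx2 : T * (U * V / (T * Wc) - 1) = U * V / Wc - T := by
        rw [mul_sub, mul_one]
        congr 1
        field_simp
      have hmul := mul_lt_mul_of_pos_left hlog htpos
      rw [hexp, hx2] at hmul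
      unfold cmiTerm at hsl
      dsimp only at hsl
      nlinarith [hsl, hmul]


section entrewrite
variable {Om A B C : Type*} [Fintype Om] [Fintype A] [Fintype B] [Fintype C]
  (p : Om → ℝ) (f : Om → A) (g : Om → B) (h : Om → C)

lemma push_marg_fst (G : Om → A) (H : Om → C) (c : C) :
    push p H c = ∑ a, push p (fun om => (G om, H om)) (a, c) := by
  unfold push
  rw [Finset.sum_comm]
  refine Finset.sum_congr rfl fun om _ => ?_
  dsimp only
  simp [Prod.mk.injEq, ite_and, Finset.sum_ite_eq]

lemma push_marg_u (a : A) (c : C) :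
    push p (fun om => (f om, h om)) (a, c)
      = ∑ b, push p (fun om => (f om, g om, h om)) (a, b, c) := by
  unfold push
  rw [Finset.sum_comm]
  refine Finset.sum_congr rfl fun om _ => ?_
  dsimp only
  by_cases h2 : f om = a <;> by_cases h3 : h om = c <;>
    simp [Prod.mk.injEq, ite_and, Finset.sum_ite_eq, h2, h3]

lemma push_marg_v (b : B) (c : C) :
    push p (fun om => (g om, h om)) (b, c)
      = ∑ a, push p (fun om => (f om, g om, h om)) (a, b, c) :=
  push_marg_fst p f (fun om => (g om, h om)) (b, c)

lemma push_marg_w (c : C) :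
    push p h c = ∑ a, ∑ b, push p (fun om => (f om, g om, h om)) (a, b, c) := by
  rw [push_marg_fst p g h c, Finset.sum_comm]
  exact Finset.sum_congr rfl fun b _ => push_marg_v p f g h b c

lemma neg_sum_mul_log (S : Finset B) (q : B → ℝ) (L : ℝ) :
    ∑ b ∈ S, -(q b * L) = -((∑ b ∈ S, q b) * L) := by
  rw [Finset.sum_mul, ← Finset.sum_neg_distrib]

lemma condMutInfo_eq_sum :
    condMutInfo p f g h = ∑ x : A × B × C,
      cmiTerm (push p (fun om => (f om, g om, h om))) (push p (fun om => (f om, h om)))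
        (push p (fun om => (g om, h om))) (push p h) x := by
  set t := push p (fun om => (f om, g om, h om)) with hht
  set u := push p (fun om => (f om, h om)) with hhu
  set v := push p (fun om => (g om, h om)) with hhv
  set w := push p h with hhw
  have hmu : ∀ a c, u (a, c) = ∑ b, t (a, b, c) := fun a c => push_marg_u p f g h a c
  have hmv : ∀ b c, v (b, c) = ∑ a, t (a, b, c) := fun b c => push_marg_v p f g h b c
  have hmw : ∀ c, w c = ∑ a, ∑ b, t (a, b, c) := fun c => push_marg_w p f g h c
  have E1 : ent p (fun om => (f om, h om))
      = ∑ x : A × B × C, -(t x * Real.log (u (x.1, x.2.2))) := by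
    rw [sum3]
    show ∑ y : A × C, Real.negMulLog (u y) = _
    rw [Fintype.sum_prod_type, Finset.sum_comm]
    refine Finset.sum_congr rfl fun c _ => Finset.sum_congr rfl fun a _ => ?_
    dsimp only
    rw [neg_sum_mul_log Finset.univ (fun b => t (a, b, c)) (Real.log (u (a, c))),
      ← hmu a c]
    simp [Real.negMulLog]
  have E2 : ent p (fun om => (g om, h om))
      = ∑ x : A × B × C, -(t x * Real.log (v (x.2.1, x.2.2))) := by
    rw [sum3]
    show ∑ y : B × C, Real.negMulLog (v y) = _
    rw [Fintype.sum_prod_type, Finset.sum_comm]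
    refine Finset.sum_congr rfl fun c _ => ?_
    rw [Finset.sum_comm]
    refine Finset.sum_congr rfl fun b _ => ?_
    dsimp only
    rw [neg_sum_mul_log Finset.univ (fun a => t (a, b, c)) (Real.log (v (b, c))),
      ← hmv b c]
    simp [Real.negMulLog]
  have E3 : ent p (fun om => (f om, g om, h om))
      = ∑ x : A × B × C, -(t x * Real.log (t x)) := by
    show ∑ x : A × B × C, Real.negMulLog (t x) = _
    exact Finset.sum_congr rfl fun x _ => by simp [Real.negMulLog]
  have E4 : ent p h = ∑ x : A × B × C, -(t x * Real.log (w x.2.2)) := by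
    rw [sum3]
    show ∑ c : C, Real.negMulLog (w c) = _
    refine Finset.sum_congr rfl fun c _ => ?_
    dsimp only
    have hin : ∀ a : A, (∑ b, -(t (a, b, c) * Real.log (w c)))
        = -((∑ b, t (a, b, c)) * Real.log (w c)) :=
      fun a => neg_sum_mul_log Finset.univ (fun b => t (a, b, c)) (Real.log (w c))
    rw [Finset.sum_congr rfl fun a _ => hin a,
      neg_sum_mul_log Finset.univ (fun a => ∑ b, t (a, b, c)) (Real.log (w c)), ← hmw c]
    simp [Real.negMulLog]
  unfold condMutInfo
  rw [E1, E2, E3, E4, ← Finset.sum_add_distrib, ← Finset.sum_sub_distrib,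
    ← Finset.sum_sub_distrib]
  refine Finset.sum_congr rfl fun x _ => ?_
  unfold cmiTerm
  ring

end entrewrite

end core

section wrappers
variable {Om A B C : Type*} [Fintype Om] [Fintype A] [Fintype B] [Fintype C]

lemma cmi_sum_zero_of_fact (t : A × B × C → ℝ) (u : A × C → ℝ) (v : B × C → ℝ) (w : C → ℝ)
    (ht : ∀ x, 0 ≤ t x)
    (hu : ∀ a c, u (a, c) = ∑ b, t (a, b, c))
    (hv : ∀ b c, v (b, c) = ∑ a, t (a, b, c))
    (hw : ∀ c, w c = ∑ a, ∑ b, t (a, b, c))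
    (hfac : ∀ x : A × B × C, t x * w x.2.2 = u (x.1, x.2.2) * v (x.2.1, x.2.2)) :
    ∑ x : A × B × C, cmiTerm t u v w x = 0 := by
  refine Finset.sum_eq_zero fun x _ => ?_
  obtain ⟨a, b, c⟩ := x
  unfold cmiTerm
  dsimp only
  rcases eq_or_lt_of_le (ht (a, b, c)) with h0 | hpos
  · rw [← h0, zero_mul]
  · have hule : t (a, b, c) ≤ u (a, c) := by
      rw [hu]
      exact Finset.single_le_sum (fun b' _ => ht (a, b', c)) (Finset.mem_univ b)
    have hvle : t (a, b, c) ≤ v (b, c) := by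
      rw [hv]
      exact Finset.single_le_sum (fun a' _ => ht (a', b, c)) (Finset.mem_univ a)
    have hupos : 0 < u (a, c) := lt_of_lt_of_le hpos hule
    have hvpos : 0 < v (b, c) := lt_of_lt_of_le hpos hvle
    have hwpos : 0 < w c := by
      rw [hw]
      calc 0 < u (a, c) := hupos
        _ = ∑ b, t (a, b, c) := hu a c
        _ ≤ ∑ a, ∑ b, t (a, b, c) :=
          Finset.single_le_sum (f := fun a' => ∑ b, t (a', b, c))
            (fun a' _ => Finset.sum_nonneg fun _ _ => ht _) (Finset.mem_univ a)
    have hfx := hfac (a, b, c)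
    dsimp only at hfx
    have hlogs : Real.log (t (a, b, c)) + Real.log (w c)
        = Real.log (u (a, c)) + Real.log (v (b, c)) := by
      rw [← Real.log_mul hpos.ne' hwpos.ne', ← Real.log_mul hupos.ne' hvpos.ne', hfx]
    rw [show Real.log (t (a, b, c)) + Real.log (w c)
        - Real.log (u (a, c)) - Real.log (v (b, c))
        = (Real.log (t (a, b, c)) + Real.log (w c))
          - (Real.log (u (a, c)) + Real.log (v (b, c))) by ring, hlogs, sub_self, mul_zero]

lemma ent_precomp {Om' : Type*} [Fintype Om'] (p : Om → ℝ) (e : Om → Om') (F : Om' → A) :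
    ent p (fun om => F (e om)) = ent (push p e) F := by
  unfold ent
  rw [push_comp]

lemma condMutInfo_nonneg (p : Om → ℝ) (hp : ∀ om, 0 ≤ p om)
    (f : Om → A) (g : Om → B) (h : Om → C) : 0 ≤ condMutInfo p f g h := by
  rw [condMutInfo_eq_sum p f g h]
  exact cmi_sum_nonneg _ _ _ _ (fun x => push_nonneg p hp _ x)
    (push_marg_u p f g h) (push_marg_v p f g h) (push_marg_w p f g h)

lemma condMutInfo_precomp {Om' : Type*} [Fintype Om'] (p : Om → ℝ) (e : Om → Om')
    (f : Om' → A) (g : Om' → B) (h : Om' → C) :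
    condMutInfo (push p e) f g h
      = condMutInfo p (fun om => f (e om)) (fun om => g (e om)) (fun om => h (e om)) := by
  unfold condMutInfo
  have e1 := ent_precomp p e (fun z => (f z, h z))
  have e2 := ent_precomp p e (fun z => (g z, h z))
  have e3 := ent_precomp p e (fun z => (f z, g z, h z))
  have e4 := ent_precomp p e h
  rw [← e1, ← e2, ← e3, ← e4]

lemma cmi_zero_fact (s : A × B × C → ℝ) (hs0 : ∀ z, 0 ≤ s z)
    (hz : condMutInfo s (fun z => z.1) (fun z => z.2.1) (fun z => z.2.2) = 0) :
    ∀ a b c, s (a, b, c) * (∑ a', ∑ b', s (a', b', c))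
      = (∑ b', s (a, b', c)) * (∑ a', s (a', b, c)) := by
  have hpid : push s (fun z : A × B × C => (z.1, z.2.1, z.2.2)) = s := push_id s
  have h1 : ∀ (a : A) (c : C),
      push s (fun z : A × B × C => (z.1, z.2.2)) (a, c) = ∑ b, s (a, b, c) := by
    intro a c
    rw [push_marg_u s (fun z => z.1) (fun z => z.2.1) (fun z => z.2.2) a c]
    exact Finset.sum_congr rfl fun b _ => congrFun hpid (a, b, c)
  have h2 : ∀ (b : B) (c : C),
      push s (fun z : A × B × C => (z.2.1, z.2.2)) (b, c) = ∑ a, s (a, b, c) := by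
    intro b c
    rw [push_marg_v s (fun z => z.1) (fun z => z.2.1) (fun z => z.2.2) b c]
    exact Finset.sum_congr rfl fun a _ => congrFun hpid (a, b, c)
  have h3 : ∀ c : C,
      push s (fun z : A × B × C => z.2.2) c = ∑ a, ∑ b, s (a, b, c) := by
    intro c
    rw [push_marg_w s (fun z => z.1) (fun z => z.2.1) (fun z => z.2.2) c]
    exact Finset.sum_congr rfl fun a _ => Finset.sum_congr rfl fun b _ =>
      congrFun hpid (a, b, c)
  have e1 := condMutInfo_eq_sum s (fun z : A × B × C => z.1) (fun z => z.2.1) (fun z => z.2.2)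
  have hz2 : ∑ x : A × B × C, cmiTerm s (push s (fun z : A × B × C => (z.1, z.2.2)))
      (push s (fun z : A × B × C => (z.2.1, z.2.2)))
      (push s (fun z : A × B × C => z.2.2)) x = 0 := by
    rw [hpid] at e1
    exact e1.symm.trans hz
  have hres := cmi_sum_eq_zero_imp s (push s (fun z : A × B × C => (z.1, z.2.2)))
    (push s (fun z : A × B × C => (z.2.1, z.2.2)))
    (push s (fun z : A × B × C => z.2.2)) hs0 h1 h2 h3 hz2
  intro a b c
  have hx := hres (a, b, c)
  dsimp only at hx
  rw [h1 a c, h2 b c, h3 c] at hx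
  exact hx

lemma condMutInfo_zero_fact_general (s : A × B × C → ℝ) (hs0 : ∀ z, 0 ≤ s z)
    (hz : condMutInfo s (fun z => z.1) (fun z => z.2.1) (fun z => z.2.2) = 0) : True := trivial

end wrappers

section mainlemmas
variable {Om A B C : Type*} [Fintype Om] [Fintype A] [Fintype B] [Fintype C]

lemma push_marg_snd (p : Om → ℝ) (G : Om → A) (H : Om → C) (a : A) :
    push p G a = ∑ c, push p (fun om => (G om, H om)) (a, c) := by
  unfold push
  rw [Finset.sum_comm]
  refine Finset.sum_congr rfl fun om _ => ?_
  dsimp only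
  by_cases h2 : G om = a <;> simp [Prod.mk.injEq, ite_and, Finset.sum_ite_eq, h2]

lemma push_eval_zero (p : Om → ℝ) (f : Om → A) (a : A) (hne : ∀ om, f om ≠ a) :
    push p f a = 0 :=
  Finset.sum_eq_zero fun om _ => if_neg (hne om)

lemma main_bound {X Y W : Type*} [Fintype X] [Fintype Y] [Fintype W] [Inhabited W]
    (P : X × Y → ℝ)
    (ell : (X ⊕ Y) → W)
    (hedge : ∀ x y, 0 < P (x, y) → ell (Sum.inl x) = ell (Sum.inr y))
    (n : ℕ) (r : X × Y × Fin n → ℝ) (hr0 : ∀ om, 0 ≤ r om)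
    (hm : ∀ xy : X × Y, push r (fun om => (om.1, om.2.1)) xy = P xy)
    (hc0 : condMutInfo r (fun om => om.1) (fun om => om.2.1) (fun om => om.2.2) = 0) :
    ent P (fun xy : X × Y => ell (Sum.inl xy.1)) ≤
      mutInfo r (fun om => (om.1, om.2.1)) (fun om => om.2.2) := by
  classical
  have hfac := cmi_zero_fact r hr0 hc0
  have hPr : ∀ x y, P (x, y) = ∑ c, r (x, y, c) := by
    intro x y
    rw [← hm (x, y),
      push_marg_snd r (fun om => (om.1, om.2.1)) (fun om => om.2.2) (x, y)]
    refine Finset.sum_congr rfl fun c _ => ?_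
    exact push_comp_eval r (fun om : X × Y × Fin n => ((om.1, om.2.1), om.2.2)) (x, y, c)
      (fun a b hab => Prod.ext (congrArg (fun q => q.1.1) hab)
        (Prod.ext (congrArg (fun q => q.1.2) hab) (congrArg (fun q => q.2) hab)))
  have hppos : ∀ x y c, 0 < r (x, y, c) → 0 < P (x, y) := by
    intro x y c h
    rw [hPr x y]
    exact lt_of_lt_of_le h
      (Finset.single_le_sum (f := fun c' => r (x, y, c')) (fun c' _ => hr0 _)
        (Finset.mem_univ c))
  have hdet : ∀ (x x' : X) (y y' : Y) (c : Fin n), 0 < r (x, y, c) → 0 < r (x', y', c) →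
      ell (Sum.inl x) = ell (Sum.inl x') := by
    intro x x' y y' c h1 h2
    have hU : 0 < ∑ y'', r (x, y'', c) :=
      lt_of_lt_of_le h1 (Finset.single_le_sum (f := fun y'' => r (x, y'', c))
        (fun _ _ => hr0 _) (Finset.mem_univ y))
    have hV : 0 < ∑ x'', r (x'', y', c) :=
      lt_of_lt_of_le h2 (Finset.single_le_sum (f := fun x'' => r (x'', y', c))
        (fun _ _ => hr0 _) (Finset.mem_univ x'))
    have h3 : 0 < (∑ y'', r (x, y'', c)) * (∑ x'', r (x'', y', c)) := mul_pos hU hV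
    rw [← hfac x y' c] at h3
    have h4 : 0 < r (x, y', c) := by
      rcases eq_or_lt_of_le (hr0 (x, y', c)) with h0 | h0
      · rw [← h0, zero_mul] at h3
        exact absurd h3 (lt_irrefl 0)
      · exact h0
    have e1 := hedge x y' (hppos _ _ _ h4)
    have e2 := hedge x' y' (hppos _ _ _ h2)
    rw [e1, e2]
  have hφex : ∀ c : Fin n, ∃ wv : W,
      ∀ om : X × Y × Fin n, 0 < r om → om.2.2 = c → ell (Sum.inl om.1) = wv := by
    intro c
    by_cases hc : ∃ om : X × Y × Fin n, 0 < r om ∧ om.2.2 = c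
    · obtain ⟨om₀, h₀, hcc⟩ := hc
      refine ⟨ell (Sum.inl om₀.1), fun om hom hce => ?_⟩
      have h5 : 0 < r (om.1, om.2.1, c) := by rw [← hce]; exact hom
      have h6 : 0 < r (om₀.1, om₀.2.1, c) := by rw [← hcc]; exact h₀
      exact hdet om.1 om₀.1 om.2.1 om₀.2.1 c h5 h6
    · exact ⟨default, fun om hom hce => absurd ⟨om, hom, hce⟩ hc⟩
  choose φ hφ using hφex
  have key := condMutInfo_nonneg r hr0 (fun om => (om.1, om.2.1)) (fun om => om.2.2)
    (fun om => ell (Sum.inl om.1))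
  have E1 : ent r (fun om : X × Y × Fin n => ((om.1, om.2.1), ell (Sum.inl om.1)))
      = ent r (fun om => (om.1, om.2.1)) :=
    ent_comp_inj r (fun om => (om.1, om.2.1)) (fun xy => (xy, ell (Sum.inl xy.1)))
      (fun a b hab => congrArg Prod.fst hab)
  have E2 : ent r (fun om : X × Y × Fin n => (om.2.2, ell (Sum.inl om.1)))
      = ent r (fun om => om.2.2) := by
    have hp1 : push r (fun om : X × Y × Fin n => (om.2.2, ell (Sum.inl om.1)))
        = push r (fun om => (om.2.2, φ om.2.2)) := by
      apply push_congr_ae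
      intro om hom
      have hompos : 0 < r om := lt_of_le_of_ne (hr0 om) (Ne.symm hom)
      rw [hφ om.2.2 om hompos rfl]
    have h7 := ent_comp_inj r (fun om : X × Y × Fin n => om.2.2) (fun c => (c, φ c))
      (fun a b hab => congrArg Prod.fst hab)
    calc ent r (fun om : X × Y × Fin n => (om.2.2, ell (Sum.inl om.1)))
        = ent r (fun om => (om.2.2, φ om.2.2)) := by unfold ent; rw [hp1]
      _ = ent r (fun om => om.2.2) := h7
  have E3 : ent r (fun om : X × Y × Fin n => ((om.1, om.2.1), om.2.2, ell (Sum.inl om.1)))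
      = ent r (fun om => ((om.1, om.2.1), om.2.2)) :=
    ent_comp_inj r (fun om => ((om.1, om.2.1), om.2.2))
      (fun z : (X × Y) × Fin n => (z.1, z.2, ell (Sum.inl z.1.1)))
      (fun a b hab => Prod.ext (congrArg (fun q => q.1) hab) (congrArg (fun q => q.2.1) hab))
  have E4 : ent r (fun om : X × Y × Fin n => ell (Sum.inl om.1))
      = ent P (fun xy : X × Y => ell (Sum.inl xy.1)) := by
    have hcomp := push_comp r (fun om : X × Y × Fin n => (om.1, om.2.1))
      (fun xy : X × Y => ell (Sum.inl xy.1))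
    rw [show push r (fun om : X × Y × Fin n => (om.1, om.2.1)) = P from funext hm] at hcomp
    unfold ent
    rw [hcomp]
  unfold condMutInfo at key
  rw [E1, E2, E3, E4] at key
  unfold mutInfo
  linarith [key]

end mainlemmas


lemma converse_zero {X Y W : Type*} [Fintype X] [Fintype Y] [Fintype W]
    (P : X × Y → ℝ) (hP0 : ∀ om, 0 ≤ P om)
    (ell : (X ⊕ Y) → W)
    (hlabel : ∀ u v : X ⊕ Y, ell u = ell v ↔ sameComp P u v)
    (n : ℕ) (r : X × Y × Fin n → ℝ) (hr0 : ∀ om, 0 ≤ r om)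
    (hm : ∀ xy : X × Y, push r (fun om => (om.1, om.2.1)) xy = P xy)
    (hc1 : condMutInfo r (fun om => om.1) (fun om => om.2.1) (fun om => om.2.2) = 0)
    (hc2 : condMutInfo r (fun om => om.2.1) (fun om => om.2.2) (fun om => om.1) = 0)
    (hc3 : condMutInfo r (fun om => om.1) (fun om => om.2.2) (fun om => om.2.1) = 0) :
    condMutInfo P Prod.fst Prod.snd (fun xy : X × Y => ell (Sum.inl xy.1)) = 0 := by
  classical
  have N1 := cmi_zero_fact r hr0 hc1
  -- s2 : distribution of (Y, W', X)
  have e2inj : Function.Injective (fun om : X × Y × Fin n => (om.2.1, om.2.2, om.1)) :=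
    fun a b hab => Prod.ext (congrArg (fun q => q.2.2) hab)
      (Prod.ext (congrArg (fun q => q.1) hab) (congrArg (fun q => q.2.1) hab))
  have hs2cmi : condMutInfo (push r (fun om : X × Y × Fin n => (om.2.1, om.2.2, om.1)))
      (fun z => z.1) (fun z => z.2.1) (fun z => z.2.2) = 0 := by
    rw [condMutInfo_precomp r (fun om : X × Y × Fin n => (om.2.1, om.2.2, om.1))
      (fun z => z.1) (fun z => z.2.1) (fun z => z.2.2)]
    exact hc2
  have N2' := cmi_zero_fact (push r (fun om : X × Y × Fin n => (om.2.1, om.2.2, om.1)))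
    (fun z => push_nonneg r hr0 _ z) hs2cmi
  have hs2pt : ∀ (x : X) (y : Y) (c : Fin n),
      push r (fun om : X × Y × Fin n => (om.2.1, om.2.2, om.1)) (y, c, x) = r (x, y, c) :=
    fun x y c => push_comp_eval r (fun om : X × Y × Fin n => (om.2.1, om.2.2, om.1))
      (x, y, c) e2inj
  have N2 : ∀ x y c, r (x, y, c) * (∑ y', ∑ c', r (x, y', c'))
      = (∑ c', r (x, y, c')) * (∑ y', r (x, y', c)) := by
    intro x y c
    have h := N2' y c x
    simp only [hs2pt] at h
    exact h
  -- s3 : distribution of (X, W', Y)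
  have e3inj : Function.Injective (fun om : X × Y × Fin n => (om.1, om.2.2, om.2.1)) :=
    fun a b hab => Prod.ext (congrArg (fun q => q.1) hab)
      (Prod.ext (congrArg (fun q => q.2.2) hab) (congrArg (fun q => q.2.1) hab))
  have hs3cmi : condMutInfo (push r (fun om : X × Y × Fin n => (om.1, om.2.2, om.2.1)))
      (fun z => z.1) (fun z => z.2.1) (fun z => z.2.2) = 0 := by
    rw [condMutInfo_precomp r (fun om : X × Y × Fin n => (om.1, om.2.2, om.2.1))
      (fun z => z.1) (fun z => z.2.1) (fun z => z.2.2)]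
    exact hc3
  have N3' := cmi_zero_fact (push r (fun om : X × Y × Fin n => (om.1, om.2.2, om.2.1)))
    (fun z => push_nonneg r hr0 _ z) hs3cmi
  have hs3pt : ∀ (x : X) (y : Y) (c : Fin n),
      push r (fun om : X × Y × Fin n => (om.1, om.2.2, om.2.1)) (x, c, y) = r (x, y, c) :=
    fun x y c => push_comp_eval r (fun om : X × Y × Fin n => (om.1, om.2.2, om.2.1))
      (x, y, c) e3inj
  have N3 : ∀ x y c, r (x, y, c) * (∑ x', ∑ c', r (x', y, c'))
      = (∑ c', r (x, y, c')) * (∑ x', r (x', y, c)) := by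
    intro x y c
    have h := N3' x c y
    simp only [hs3pt] at h
    exact h
  -- abbreviations
  set Pxy : X → Y → ℝ := fun x y => ∑ c, r (x, y, c) with hPxy
  set PX : X → ℝ := fun x => ∑ y, ∑ c, r (x, y, c) with hPX
  set PY : Y → ℝ := fun y => ∑ x, ∑ c, r (x, y, c) with hPY
  have hPr : ∀ x y, P (x, y) = Pxy x y := by
    intro x y
    rw [← hm (x, y),
      push_marg_snd r (fun om => (om.1, om.2.1)) (fun om => om.2.2) (x, y)]
    refine Finset.sum_congr rfl fun c _ => ?_
    exact push_comp_eval r (fun om : X × Y × Fin n => ((om.1, om.2.1), om.2.2)) (x, y, c)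
      (fun a b hab => Prod.ext (congrArg (fun q => q.1.1) hab)
        (Prod.ext (congrArg (fun q => q.1.2) hab) (congrArg (fun q => q.2) hab)))
  have hPxynn : ∀ x y, 0 ≤ Pxy x y := fun x y => Finset.sum_nonneg fun _ _ => hr0 _
  have hPXeq : ∀ x, PX x = ∑ y, Pxy x y := fun x => rfl
  have hPXle : ∀ x y, Pxy x y ≤ PX x := by
    intro x y
    rw [hPXeq]
    exact Finset.single_le_sum (f := fun y' => Pxy x y') (fun y' _ => hPxynn x y')
      (Finset.mem_univ y)
  have hPYle : ∀ x y, Pxy x y ≤ PY y := by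
    intro x y
    exact Finset.single_le_sum (f := fun x' => ∑ c, r (x', y, c))
      (fun x' _ => Finset.sum_nonneg fun _ _ => hr0 _) (Finset.mem_univ x)
  -- C1 : sharing a common y₀ forces proportional rows
  have C1 : ∀ x x' y₀, 0 < Pxy x y₀ → 0 < Pxy x' y₀ →
      ∀ y, Pxy x y * PX x' = PX x * Pxy x' y := by
    intro x x' y₀ hx hx'
    have alpha : ∀ z : X, 0 < Pxy z y₀ → ∀ c,
        (∑ y', r (z, y', c)) * PY y₀ = (∑ x'', r (x'', y₀, c)) * PX z := by
      intro z hz c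
      have n2 := N2 z y₀ c
      have n3 := N3 z y₀ c
      apply mul_left_cancel₀ (ne_of_gt hz)
      linear_combination (PX z) * n3 - (PY y₀) * n2
    have hPYpos : 0 < PY y₀ := lt_of_lt_of_le hx (hPYle x y₀)
    have beta : ∀ c, (∑ y', r (x, y', c)) * PX x' = (∑ y', r (x', y', c)) * PX x := by
      intro c
      have a1 := alpha x hx c
      have a2 := alpha x' hx' c
      apply mul_right_cancel₀ (ne_of_gt hPYpos)
      linear_combination (PX x') * a1 - (PX x) * a2
    have hptc : ∀ y c, r (x, y, c) * PX x' = r (x', y, c) * PX x := by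
      intro y c
      have n1x := N1 x y c
      have n1x' := N1 x' y c
      rcases eq_or_lt_of_le (show (0:ℝ) ≤ ∑ x'', ∑ y'', r (x'', y'', c) from
          Finset.sum_nonneg fun _ _ => Finset.sum_nonneg fun _ _ => hr0 _) with hw0 | hwpos
      · have hb1 : ∀ z : X, r (z, y, c) = 0 := by
          intro z
          have h1 : r (z, y, c) ≤ ∑ y'', r (z, y'', c) :=
            Finset.single_le_sum (f := fun y'' => r (z, y'', c)) (fun _ _ => hr0 _)
              (Finset.mem_univ y)
          have h2 : (∑ y'', r (z, y'', c)) ≤ ∑ x'', ∑ y'', r (x'', y'', c) :=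
            Finset.single_le_sum (f := fun x'' => ∑ y'', r (x'', y'', c))
              (fun _ _ => Finset.sum_nonneg fun _ _ => hr0 _) (Finset.mem_univ z)
          have := le_trans h1 h2
          rw [← hw0] at this
          exact le_antisymm this (hr0 _)
        rw [hb1 x, hb1 x', zero_mul, zero_mul]
      · apply mul_right_cancel₀ (ne_of_gt hwpos)
        linear_combination (PX x') * n1x - (PX x) * n1x' + (∑ x'', r (x'', y, c)) * (beta c)
    intro y
    calc Pxy x y * PX x' = ∑ c, r (x, y, c) * PX x' := by rw [hPxy, Finset.sum_mul]
      _ = ∑ c, r (x', y, c) * PX x := Finset.sum_congr rfl fun c _ => hptc y c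
      _ = PX x * Pxy x' y := by rw [hPxy, ← Finset.sum_mul, mul_comm]
  -- C2 : transitivity through a positive intermediate
  have C2 : ∀ x x'' x', (∀ y, Pxy x y * PX x'' = PX x * Pxy x'' y) →
      (∀ y, Pxy x'' y * PX x' = PX x'' * Pxy x' y) → 0 < PX x'' →
      (∀ y, Pxy x y * PX x' = PX x * Pxy x' y) := by
    intro x x'' x' h1 h2 hpos y
    apply mul_left_cancel₀ (ne_of_gt hpos)
    linear_combination (PX x') * (h1 y) + (PX x) * (h2 y)
  -- connectivity induction
  have CR : ∀ x x', ell (Sum.inl x) = ell (Sum.inl x') →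
      ∀ y, Pxy x y * PX x' = PX x * Pxy x' y := by
    intro x x' hll
    have hcomp : sameComp P (Sum.inl x) (Sum.inl x') := (hlabel _ _).mp hll
    have main : ∀ v : X ⊕ Y, Relation.ReflTransGen (step P) (Sum.inl x) v →
        (Sum.elim (fun z => ∀ y, Pxy x y * PX z = PX x * Pxy z y)
          (fun y₂ => ∃ z, (∀ y, Pxy x y * PX z = PX x * Pxy z y) ∧ 0 < Pxy z y₂) v) := by
      intro v hv
      induction hv with
      | refl => exact fun y => mul_comm _ _
      | @tail b v' hsteps hstep ih =>
        cases b with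
        | inl z =>
          cases v' with
          | inl z' => exact hstep.elim
          | inr y₂ =>
            refine ⟨z, ih, ?_⟩
            rw [← hPr]
            exact hstep
        | inr y₂ =>
          cases v' with
          | inr y₂' => exact hstep.elim
          | inl z' =>
            obtain ⟨z₂, hrel, hpos⟩ := ih
            have hz' : 0 < Pxy z' y₂ := by
              rw [← hPr]
              exact hstep
            exact C2 x z₂ z' hrel (C1 z₂ z' y₂ hpos hz')
              (lt_of_lt_of_le hpos (hPXle z₂ y₂))
    exact main (Sum.inl x') hcomp
  -- final factorization for P
  rw [condMutInfo_eq_sum P Prod.fst Prod.snd (fun xy : X × Y => ell (Sum.inl xy.1))]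
  refine cmi_sum_zero_of_fact _ _ _ _ (fun z => push_nonneg P hP0 _ z)
    (push_marg_u P Prod.fst Prod.snd _) (push_marg_v P Prod.fst Prod.snd _)
    (push_marg_w P Prod.fst Prod.snd _) ?_
  have einjP : Function.Injective (fun xy : X × Y => (xy.1, xy.2, ell (Sum.inl xy.1))) :=
    fun a b hab => Prod.ext (congrArg (fun q => q.1) hab) (congrArg (fun q => q.2.1) hab)
  have ht1 : ∀ (x : X) (y : Y) (k : W),
      push P (fun om : X × Y => (om.1, om.2, ell (Sum.inl om.1))) (x, y, k)
        = if ell (Sum.inl x) = k then P (x, y) else 0 := by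
    intro x y k
    by_cases hk : ell (Sum.inl x) = k
    · rw [if_pos hk, ← hk]
      exact push_comp_eval P (fun xy : X × Y => (xy.1, xy.2, ell (Sum.inl xy.1))) (x, y) einjP
    · rw [if_neg hk]
      apply push_eval_zero
      intro om h
      apply hk
      have h1 : om.1 = x := congrArg (fun q => q.1) h
      have h3 : ell (Sum.inl om.1) = k := congrArg (fun q => q.2.2) h
      rw [← h1]
      exact h3
  rintro ⟨x, y, k⟩
  dsimp only
  rw [push_marg_u P Prod.fst Prod.snd (fun xy : X × Y => ell (Sum.inl xy.1)) x k,
    push_marg_v P Prod.fst Prod.snd (fun xy : X × Y => ell (Sum.inl xy.1)) y k,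
    push_marg_w P Prod.fst Prod.snd (fun xy : X × Y => ell (Sum.inl xy.1)) k]
  simp only [ht1]
  by_cases hk : ell (Sum.inl x) = k
  · simp only [hk, eq_self_iff_true, if_true, hPr]
    have lhs1 : ∀ x' : X, (∑ y', if ell (Sum.inl x') = k then Pxy x' y' else 0)
        = if ell (Sum.inl x') = k then PX x' else 0 := by
      intro x'
      by_cases h' : ell (Sum.inl x') = k <;> simp [h', hPXeq]
    rw [Finset.sum_congr rfl fun x' _ => lhs1 x', Finset.mul_sum, Finset.mul_sum]
    refine Finset.sum_congr rfl fun x' _ => ?_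
    by_cases h' : ell (Sum.inl x') = k
    · simp only [if_pos h']
      have hsum : (∑ y', Pxy x y') = PX x := (hPXeq x).symm
      rw [hsum]
      exact CR x x' (hk.trans h'.symm) y
    · simp [h']
  · simp [hk]


/-- Characterization of `I(X;Y) = C(X;Y)` via the ergodic decomposition.
`ell` labels the connected components of the bipartite graphical representation of `P`
(two vertices get the same label iff they are connected), and the ergodic decomposition
`W` of `(X,Y)` is `wfun (x,y) = ell (inl x)`.  Then:
(i) if `X - W - Y` is a Markov chain, `I(X;Y) = C(X;Y)`, i.e. `W` achieves
`I(X,Y;W) = I(X;Y)` and `I(X;Y)` lower bounds `I(X,Y;W')` for every `W'` (on a finite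
alphabet `Fin n`) making `X` and `Y` conditionally independent;
(ii) conversely, if `I(X;Y) = C(X;Y)` (some such `W'` achieves `I(X,Y;W') = I(X;Y)`),
then `X - W - Y` is a Markov chain. -/
theorem mutInfo_eq_wyner_iff_ergodic_markov {X Y W : Type*} [Fintype X] [Fintype Y] [Fintype W]
    (P : X × Y → ℝ) (hP : IsDist P) (ell : (X ⊕ Y) → W)
    (hlabel : ∀ u v : X ⊕ Y, ell u = ell v ↔ sameComp P u v)
    (wfun : X × Y → W) (hw : ∀ xy : X × Y, wfun xy = ell (Sum.inl xy.1)) :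
    (condMutInfo P Prod.fst Prod.snd wfun = 0 →
      (mutInfo P (fun xy => xy) wfun = mutInfo P Prod.fst Prod.snd ∧
       ∀ (n : ℕ) (r : X × Y × Fin n → ℝ), IsDist r →
        (∀ xy : X × Y, push r (fun om => (om.1, om.2.1)) xy = P xy) →
        condMutInfo r (fun om => om.1) (fun om => om.2.1) (fun om => om.2.2) = 0 →
        mutInfo P Prod.fst Prod.snd ≤
          mutInfo r (fun om => (om.1, om.2.1)) (fun om => om.2.2))) ∧
    ((∃ (n : ℕ) (r : X × Y × Fin n → ℝ), IsDist r ∧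
        (∀ xy : X × Y, push r (fun om => (om.1, om.2.1)) xy = P xy) ∧
        condMutInfo r (fun om => om.1) (fun om => om.2.1) (fun om => om.2.2) = 0 ∧
        mutInfo r (fun om => (om.1, om.2.1)) (fun om => om.2.2) =
          mutInfo P Prod.fst Prod.snd) →
      condMutInfo P Prod.fst Prod.snd wfun = 0) := by
  classical
  obtain ⟨hP0, hP1⟩ := hP
  have hex : ∃ om : X × Y, P om ≠ 0 := by
    by_contra hcon
    push_neg at hcon
    rw [Finset.sum_eq_zero (fun om _ => hcon om)] at hP1
    norm_num at hP1
  obtain ⟨om0, hom0⟩ := hex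
  haveI : Inhabited W := ⟨ell (Sum.inl om0.1)⟩
  have hedge : ∀ x y, 0 < P (x, y) → ell (Sum.inl x) = ell (Sum.inr y) :=
    fun x y hxy => (hlabel _ _).mpr (Relation.ReflTransGen.single hxy)
  -- identity (I)
  have hentfw : ent P (fun om : X × Y => (om.1, wfun om)) = ent P Prod.fst := by
    rw [show (fun om : X × Y => (om.1, wfun om))
        = (fun om : X × Y => (om.1, ell (Sum.inl om.1))) from funext fun om => by rw [hw]]
    exact ent_comp_inj P Prod.fst (fun x => (x, ell (Sum.inl x)))
      (fun a b hab => congrArg Prod.fst hab)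
  have hentsw : ent P (fun om : X × Y => (om.2, wfun om)) = ent P Prod.snd := by
    have hps : push P (fun om : X × Y => (om.2, wfun om))
        = push P (fun om : X × Y => (om.2, ell (Sum.inr om.2))) := by
      apply push_congr_ae
      intro om hom
      have hpos : 0 < P om := lt_of_le_of_ne (hP0 om) (Ne.symm hom)
      rw [hw om, hedge om.1 om.2 hpos]
    calc ent P (fun om : X × Y => (om.2, wfun om))
        = ent P (fun om : X × Y => (om.2, ell (Sum.inr om.2))) := by unfold ent; rw [hps]
      _ = ent P Prod.snd := ent_comp_inj P Prod.snd (fun y => (y, ell (Sum.inr y)))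
          (fun a b hab => congrArg Prod.fst hab)
  have hentxyw : ent P (fun om : X × Y => (om.1, om.2, wfun om))
      = ent P (fun xy : X × Y => xy) := by
    rw [show (fun om : X × Y => (om.1, om.2, wfun om))
        = (fun om : X × Y => (om.1, om.2, ell (Sum.inl om.1))) from funext fun om => by rw [hw]]
    exact ent_comp_inj P (fun xy : X × Y => xy)
      (fun xy : X × Y => (xy.1, xy.2, ell (Sum.inl xy.1)))
      (fun a b hab => Prod.ext (congrArg (fun q => q.1) hab) (congrArg (fun q => q.2.1) hab))
  have hI : condMutInfo P Prod.fst Prod.snd wfun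
      = mutInfo P Prod.fst Prod.snd - ent P wfun := by
    have h0 : condMutInfo P Prod.fst Prod.snd wfun
        = ent P (fun om : X × Y => (om.1, wfun om)) + ent P (fun om : X × Y => (om.2, wfun om))
          - ent P (fun om : X × Y => (om.1, om.2, wfun om)) - ent P wfun := rfl
    have hm0 : mutInfo P Prod.fst Prod.snd
        = ent P Prod.fst + ent P Prod.snd - ent P (fun xy : X × Y => xy) := rfl
    rw [h0, hentfw, hentsw, hentxyw, hm0]
  have hIda : mutInfo P (fun xy : X × Y => xy) wfun = ent P wfun := by
    have h0 : mutInfo P (fun xy : X × Y => xy) wfun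
        = ent P (fun xy : X × Y => xy) + ent P wfun
          - ent P (fun om : X × Y => (om, wfun om)) := rfl
    have h1 : ent P (fun om : X × Y => (om, wfun om)) = ent P (fun xy : X × Y => xy) := by
      rw [show (fun om : X × Y => (om, wfun om))
          = (fun om : X × Y => (om, ell (Sum.inl om.1))) from funext fun om => by rw [hw]]
      exact ent_comp_inj P (fun xy : X × Y => xy) (fun xy => (xy, ell (Sum.inl xy.1)))
        (fun a b hab => congrArg Prod.fst hab)
    rw [h0, h1]
    ring
  have hwfunent : ent P wfun = ent P (fun xy : X × Y => ell (Sum.inl xy.1)) :=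
    congrArg (ent P) (funext hw)
  constructor
  · intro hcm
    have hIeq : mutInfo P Prod.fst Prod.snd = ent P wfun := by
      have := hI.symm.trans hcm
      linarith
    refine ⟨by rw [hIda]; exact hIeq.symm, ?_⟩
    intro n r hr hm2 hc
    rw [hIeq, hwfunent]
    exact main_bound P ell hedge n r hr.1 hm2 hc
  · rintro ⟨n, r, hr, hm2, hc1, heq⟩
    have hr0 := hr.1
    -- canonical entropy relabelings under r
    have R1 : ent r (fun om : X × Y × Fin n => (om.1, om.2.1))
        = ent P (fun xy : X × Y => xy) := by
      have h := ent_precomp r (fun om : X × Y × Fin n => (om.1, om.2.1)) (fun xy : X × Y => xy)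
      rw [show push r (fun om : X × Y × Fin n => (om.1, om.2.1)) = P from funext hm2] at h
      exact h
    have RXP : ent r (fun om : X × Y × Fin n => om.1) = ent P Prod.fst := by
      have h := ent_precomp r (fun om : X × Y × Fin n => (om.1, om.2.1))
        (Prod.fst (α := X) (β := Y))
      rw [show push r (fun om : X × Y × Fin n => (om.1, om.2.1)) = P from funext hm2] at h
      exact h
    have RYP : ent r (fun om : X × Y × Fin n => om.2.1) = ent P Prod.snd := by
      have h := ent_precomp r (fun om : X × Y × Fin n => (om.1, om.2.1))
        (Prod.snd (α := X) (β := Y))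
      rw [show push r (fun om : X × Y × Fin n => (om.1, om.2.1)) = P from funext hm2] at h
      exact h
    have R4 : ent r (fun om : X × Y × Fin n => (om.2.1, om.1))
        = ent r (fun om : X × Y × Fin n => (om.1, om.2.1)) :=
      ent_comp_inj r (fun om : X × Y × Fin n => (om.1, om.2.1)) Prod.swap Prod.swap_injective
    have R5 : ent r (fun om : X × Y × Fin n => (om.2.2, om.1))
        = ent r (fun om : X × Y × Fin n => (om.1, om.2.2)) :=
      ent_comp_inj r (fun om : X × Y × Fin n => (om.1, om.2.2)) Prod.swap Prod.swap_injective
    have R7 : ent r (fun om : X × Y × Fin n => (om.2.2, om.2.1))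
        = ent r (fun om : X × Y × Fin n => (om.2.1, om.2.2)) :=
      ent_comp_inj r (fun om : X × Y × Fin n => (om.2.1, om.2.2)) Prod.swap Prod.swap_injective
    have R6 : ent r (fun om : X × Y × Fin n => (om.2.1, om.2.2, om.1))
        = ent r (fun om : X × Y × Fin n => om) :=
      ent_comp_inj r (fun om : X × Y × Fin n => om)
        (fun z : X × Y × Fin n => (z.2.1, z.2.2, z.1))
        (fun a b hab => Prod.ext (congrArg (fun q => q.2.2) hab)
          (Prod.ext (congrArg (fun q => q.1) hab) (congrArg (fun q => q.2.1) hab)))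
    have R8 : ent r (fun om : X × Y × Fin n => (om.1, om.2.2, om.2.1))
        = ent r (fun om : X × Y × Fin n => om) :=
      ent_comp_inj r (fun om : X × Y × Fin n => om)
        (fun z : X × Y × Fin n => (z.1, z.2.2, z.2.1))
        (fun a b hab => Prod.ext (congrArg (fun q => q.1) hab)
          (Prod.ext (congrArg (fun q => q.2.2) hab) (congrArg (fun q => q.2.1) hab)))
    have R3 : ent r (fun om : X × Y × Fin n => ((om.1, om.2.1), om.2.2))
        = ent r (fun om : X × Y × Fin n => om) :=
      ent_comp_inj r (fun om : X × Y × Fin n => om)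
        (fun z : X × Y × Fin n => ((z.1, z.2.1), z.2.2))
        (fun a b hab => Prod.ext (congrArg (fun q => q.1.1) hab)
          (Prod.ext (congrArg (fun q => q.1.2) hab) (congrArg (fun q => q.2) hab)))
    have hc1' : ent r (fun om : X × Y × Fin n => (om.1, om.2.2))
        + ent r (fun om : X × Y × Fin n => (om.2.1, om.2.2))
        - ent r (fun om : X × Y × Fin n => om)
        - ent r (fun om : X × Y × Fin n => om.2.2) = 0 := hc1
    have heq' : ent P (fun xy : X × Y => xy) + ent r (fun om : X × Y × Fin n => om.2.2)
        - ent r (fun om : X × Y × Fin n => om) = mutInfo P Prod.fst Prod.snd := by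
      have h : mutInfo r (fun om : X × Y × Fin n => (om.1, om.2.1)) (fun om => om.2.2)
          = ent r (fun om : X × Y × Fin n => (om.1, om.2.1))
            + ent r (fun om : X × Y × Fin n => om.2.2)
            - ent r (fun om : X × Y × Fin n => ((om.1, om.2.1), om.2.2)) := rfl
      rw [h, R1, R3] at heq
      linarith
    have hMP : mutInfo P Prod.fst Prod.snd
        = ent P Prod.fst + ent P Prod.snd - ent P (fun xy : X × Y => xy) := rfl
    have hv2 : condMutInfo r (fun om : X × Y × Fin n => om.2.1) (fun om => om.2.2)
          (fun om => om.1)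
        = ent P (fun xy : X × Y => xy) + ent r (fun om : X × Y × Fin n => (om.1, om.2.2))
          - ent r (fun om : X × Y × Fin n => om) - ent P Prod.fst := by
      have h : condMutInfo r (fun om : X × Y × Fin n => om.2.1) (fun om => om.2.2)
            (fun om => om.1)
          = ent r (fun om : X × Y × Fin n => (om.2.1, om.1))
            + ent r (fun om : X × Y × Fin n => (om.2.2, om.1))
            - ent r (fun om : X × Y × Fin n => (om.2.1, om.2.2, om.1))
            - ent r (fun om : X × Y × Fin n => om.1) := rfl
      rw [h, R4, R5, R6, R1, RXP]
    have hv3 : condMutInfo r (fun om : X × Y × Fin n => om.1) (fun om => om.2.2)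
          (fun om => om.2.1)
        = ent P (fun xy : X × Y => xy) + ent r (fun om : X × Y × Fin n => (om.2.1, om.2.2))
          - ent r (fun om : X × Y × Fin n => om) - ent P Prod.snd := by
      have h : condMutInfo r (fun om : X × Y × Fin n => om.1) (fun om => om.2.2)
            (fun om => om.2.1)
          = ent r (fun om : X × Y × Fin n => (om.1, om.2.1))
            + ent r (fun om : X × Y × Fin n => (om.2.2, om.2.1))
            - ent r (fun om : X × Y × Fin n => (om.1, om.2.2, om.2.1))
            - ent r (fun om : X × Y × Fin n => om.2.1) := rfl
      rw [h, R7, R8, R1, RYP]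
    have hn2 := condMutInfo_nonneg r hr0 (fun om : X × Y × Fin n => om.2.1)
      (fun om => om.2.2) (fun om => om.1)
    have hn3 := condMutInfo_nonneg r hr0 (fun om : X × Y × Fin n => om.1)
      (fun om => om.2.2) (fun om => om.2.1)
    rw [hv2] at hn2
    rw [hv3] at hn3
    rw [hMP] at heq'
    have hc2 : condMutInfo r (fun om : X × Y × Fin n => om.2.1) (fun om => om.2.2)
        (fun om => om.1) = 0 := by
      rw [hv2]
      linarith
    have hc3 : condMutInfo r (fun om : X × Y × Fin n => om.1) (fun om => om.2.2)
        (fun om => om.2.1) = 0 := by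
      rw [hv3]
      linarith
    have hz := converse_zero P hP0 ell hlabel n r hr0 hm2 hc1 hc2 hc3
    rw [show wfun = (fun xy : X × Y => ell (Sum.inl xy.1)) from funext hw]
    exact hz
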